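/- arXiv:1912.10250 — 4 statements merged into one kernel-verified Lean document; each statement's English description precedes it below -/
import Mathlib

section
/- Let g:(a,b)→ℝ be a C² function with |g''(x)| ≤ C/(x-a)² + C/(b-x)² for all x∈(a,b). Let y₀=(a+b)/2 and suppose there exists x₀∈(a,b) with g'(x₀)=0. Then for every x∈(a,b), |g(x)-g(y₀)| ≤ C(-log((x-a)/(b-a)) - log((b-x)/(b-a)) + (b-a)/(x₀-a) + (b-a)/(b-x₀)). -/
/-!
Integrating the bound on `g''` from `x₀`, where `g'` vanishes, against the primitive
`C / (b - t) - C / (t - a)` of the right-hand side gives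
`|g' t| ≤ C / (t - a) + C / (b - t) + K` with `K = C / (x₀ - a) + C / (b - x₀)`.
Integrating once more from the midpoint, where the primitive `C * log ((t - a) / (b - t))`
vanishes, gives the logarithmic bound. Each integration is a comparison `|f q - f p| ≤ φ q - φ p`
for `|f'| ≤ φ'`, i.e. the monotonicity of `φ ± f`.
-/

open Set

theorem sub_le_sub_of_hasDerivAt_le {f f' φ φ' : ℝ → ℝ} {p q : ℝ} (hpq : p ≤ q)
    (hf : ∀ x ∈ Icc p q, HasDerivAt f (f' x) x) (hφ : ∀ x ∈ Icc p q, HasDerivAt φ (φ' x) x)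
    (hle : ∀ x ∈ Icc p q, f' x ≤ φ' x) :
    f q - f p ≤ φ q - φ p := by
  have hmono : MonotoneOn (fun x => φ x - f x) (Icc p q) :=
    monotoneOn_of_hasDerivWithinAt_nonneg (convex_Icc p q)
      (fun x hx => ((hφ x hx).sub (hf x hx)).continuousAt.continuousWithinAt)
      (fun x hx => ((hφ x (interior_subset hx)).sub (hf x (interior_subset hx))).hasDerivWithinAt)
      (fun x hx => sub_nonneg.2 (hle x (interior_subset hx)))
  have := hmono (left_mem_Icc.2 hpq) (right_mem_Icc.2 hpq) hpq
  dsimp only at this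
  linarith

theorem abs_sub_le_sub_of_abs_hasDerivAt_le {f f' φ φ' : ℝ → ℝ} {p q : ℝ} (hpq : p ≤ q)
    (hf : ∀ x ∈ Icc p q, HasDerivAt f (f' x) x) (hφ : ∀ x ∈ Icc p q, HasDerivAt φ (φ' x) x)
    (hle : ∀ x ∈ Icc p q, |f' x| ≤ φ' x) :
    |f q - f p| ≤ φ q - φ p := by
  have hup := sub_le_sub_of_hasDerivAt_le hpq hf hφ fun x hx => (le_abs_self _).trans (hle x hx)
  have hlow : -f q - -f p ≤ φ q - φ p :=
    sub_le_sub_of_hasDerivAt_le hpq (fun x hx => (hf x hx).neg) hφ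
    fun x hx => (neg_le_abs _).trans (hle x hx)
  rw [abs_le]
  constructor <;> linarith

theorem abs_sub_le_abs_sub_of_abs_hasDerivAt_le {f f' φ φ' : ℝ → ℝ} {p q : ℝ}
    (hf : ∀ x ∈ uIcc p q, HasDerivAt f (f' x) x) (hφ : ∀ x ∈ uIcc p q, HasDerivAt φ (φ' x) x)
    (hle : ∀ x ∈ uIcc p q, |f' x| ≤ φ' x) :
    |f q - f p| ≤ |φ q - φ p| := by
  rcases le_total p q with hpq | hqp
  · rw [uIcc_of_le hpq] at hf hφ hle
    exact (abs_sub_le_sub_of_abs_hasDerivAt_le hpq hf hφ hle).trans (le_abs_self _)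
  · rw [uIcc_of_ge hqp] at hf hφ hle
    rw [abs_sub_comm, abs_sub_comm (φ q)]
    exact (abs_sub_le_sub_of_abs_hasDerivAt_le hqp hf hφ hle).trans (le_abs_self _)

section Interval

variable {a b : ℝ}

theorem hasDerivAt_div_sub_sub_div_sub (C : ℝ) {t : ℝ} (ha : t - a ≠ 0) (hb : b - t ≠ 0) :
    HasDerivAt (fun t => C / (b - t) - C / (t - a)) (C / (t - a) ^ 2 + C / (b - t) ^ 2) t := by
  have h₁ := (hasDerivAt_const t C).div ((hasDerivAt_id' t).const_sub b) hb
  have h₂ := (hasDerivAt_const t C).div ((hasDerivAt_id' t).sub_const a) ha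
  exact (h₁.sub h₂).congr_deriv (by ring)

theorem hasDerivAt_mul_log_sub_sub_log_sub (C : ℝ) {t : ℝ} (ha : t - a ≠ 0) (hb : b - t ≠ 0) :
    HasDerivAt (fun t => C * (Real.log (t - a) - Real.log (b - t)))
      (C / (t - a) + C / (b - t)) t := by
  have h₁ := ((hasDerivAt_id' t).sub_const a).log ha
  have h₂ := ((hasDerivAt_id' t).const_sub b).log hb
  exact ((h₁.sub h₂).const_mul C).congr_deriv (by ring)

theorem abs_div_sub_sub_div_sub_le {C t : ℝ} (hC : 0 ≤ C) (ht : t ∈ Ioo a b) :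
    |C / (b - t) - C / (t - a)| ≤ C / (t - a) + C / (b - t) := by
  have ha : 0 ≤ C / (t - a) := div_nonneg hC (sub_nonneg.2 ht.1.le)
  have hb : 0 ≤ C / (b - t) := div_nonneg hC (sub_nonneg.2 ht.2.le)
  rw [abs_le]
  constructor <;> linarith

theorem abs_deriv_le_of_abs_deriv2_le {g' g'' : ℝ → ℝ} {C : ℝ} (hC : 0 ≤ C)
    (hg' : ∀ x ∈ Ioo a b, HasDerivAt g' (g'' x) x)
    (hbound : ∀ x ∈ Ioo a b, |g'' x| ≤ C / (x - a) ^ 2 + C / (b - x) ^ 2)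
    {x₀ : ℝ} (hx₀ : x₀ ∈ Ioo a b) (hx₀' : g' x₀ = 0) {x : ℝ} (hx : x ∈ Ioo a b) :
    |g' x| ≤ C / (x - a) + C / (b - x) + (C / (x₀ - a) + C / (b - x₀)) := by
  have hsub : uIcc x₀ x ⊆ Ioo a b := ordConnected_Ioo.uIcc_subset hx₀ hx
  have key := abs_sub_le_abs_sub_of_abs_hasDerivAt_le (fun t ht => hg' t (hsub ht))
    (fun t ht => hasDerivAt_div_sub_sub_div_sub C (sub_ne_zero.2 (hsub ht).1.ne')
      (sub_ne_zero.2 (hsub ht).2.ne')) (fun t ht => hbound t (hsub ht))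
  rw [hx₀', sub_zero] at key
  exact key.trans <| (abs_sub _ _).trans <|
    add_le_add (abs_div_sub_sub_div_sub_le hC hx) (abs_div_sub_sub_div_sub_le hC hx₀)

theorem abs_mul_log_sub_sub_log_sub_add_mul_sub_midpoint_le {C K x : ℝ} (hC : 0 ≤ C)
    (hK : 0 ≤ K) (hx : x ∈ Ioo a b) :
    |C * (Real.log (x - a) - Real.log (b - x)) + x * K
        - (C * (Real.log ((a + b) / 2 - a) - Real.log (b - (a + b) / 2)) + (a + b) / 2 * K)|
      ≤ C * (-Real.log ((x - a) / (b - a)) - Real.log ((b - x) / (b - a))) + K * (b - a) := by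
  have hxa : 0 < x - a := sub_pos.2 hx.1
  have hbx : 0 < b - x := sub_pos.2 hx.2
  have hba : 0 < b - a := hxa.trans_le (by linarith [hx.2])
  have hu : Real.log ((x - a) / (b - a)) ≤ 0 :=
    Real.log_nonpos (div_nonneg hxa.le hba.le) ((div_le_one hba).2 (by linarith))
  have hv : Real.log ((b - x) / (b - a)) ≤ 0 :=
    Real.log_nonpos (div_nonneg hbx.le hba.le) ((div_le_one hba).2 (by linarith))
  have hlog : Real.log (x - a) - Real.log (b - x)
      = Real.log ((x - a) / (b - a)) - Real.log ((b - x) / (b - a)) := by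
    rw [Real.log_div hxa.ne' hba.ne', Real.log_div hbx.ne' hba.ne']
    ring
  rw [hlog, show (a + b) / 2 - a = b - (a + b) / 2 by ring, sub_self, mul_zero, zero_add]
  have hCu := mul_nonpos_of_nonneg_of_nonpos hC hu
  have hCv := mul_nonpos_of_nonneg_of_nonpos hC hv
  have hKx₁ : K * (x - (a + b) / 2) ≤ K * (b - a) :=
    mul_le_mul_of_nonneg_left (by linarith [hx.1, hx.2]) hK
  have hKx₂ : K * ((a + b) / 2 - x) ≤ K * (b - a) :=
    mul_le_mul_of_nonneg_left (by linarith [hx.1, hx.2]) hK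
  rw [abs_le]
  constructor <;> linarith

end Interval

theorem stmt0_general (a b C : ℝ) (hab : a < b) (hC : 0 < C)
    (g g' g'' : ℝ → ℝ)
    (hg : ∀ x ∈ Set.Ioo a b, HasDerivAt g (g' x) x)
    (hg' : ∀ x ∈ Set.Ioo a b, HasDerivAt g' (g'' x) x)
    (hbound : ∀ x ∈ Set.Ioo a b, |g'' x| ≤ C / (x - a) ^ 2 + C / (b - x) ^ 2)
    (x₀ : ℝ) (hx₀ : x₀ ∈ Set.Ioo a b) (hx₀' : g' x₀ = 0) :
    ∀ x ∈ Set.Ioo a b,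
      |g x - g ((a + b) / 2)| ≤
        C * (-Real.log ((x - a) / (b - a)) - Real.log ((b - x) / (b - a))
          + (b - a) / (x₀ - a) + (b - a) / (b - x₀)) := by
  intro x hx
  set K := C / (x₀ - a) + C / (b - x₀)
  have hK : 0 ≤ K := add_nonneg (div_nonneg hC.le (sub_nonneg.2 hx₀.1.le))
    (div_nonneg hC.le (sub_nonneg.2 hx₀.2.le))
  have hsub : uIcc ((a + b) / 2) x ⊆ Ioo a b :=
    ordConnected_Ioo.uIcc_subset ⟨by linarith, by linarith⟩ hx
  have key := abs_sub_le_abs_sub_of_abs_hasDerivAt_le (fun t ht => hg t (hsub ht))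
    (φ := fun t => C * (Real.log (t - a) - Real.log (b - t)) + t * K)
    (fun t ht => (hasDerivAt_mul_log_sub_sub_log_sub C (sub_ne_zero.2 (hsub ht).1.ne')
      (sub_ne_zero.2 (hsub ht).2.ne')).add (hasDerivAt_mul_const K))
    (fun t ht => abs_deriv_le_of_abs_deriv2_le hC.le hg' hbound hx₀ hx₀' (hsub ht))
  calc |g x - g ((a + b) / 2)|
      ≤ C * (-Real.log ((x - a) / (b - a)) - Real.log ((b - x) / (b - a))) + K * (b - a) :=
        key.trans (abs_mul_log_sub_sub_log_sub_add_mul_sub_midpoint_le hC.le hK hx)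
    _ = _ := by ring

theorem stmt0 (a b C : ℝ) (hab : a < b) (hC : 0 < C)
    (g g' g'' : ℝ → ℝ)
    (hg : ∀ x ∈ Set.Ioo a b, HasDerivAt g (g' x) x)
    (hg' : ∀ x ∈ Set.Ioo a b, HasDerivAt g' (g'' x) x)
    (hg''cont : ContinuousOn g'' (Set.Ioo a b))
    (hbound : ∀ x ∈ Set.Ioo a b, |g'' x| ≤ C / (x - a) ^ 2 + C / (b - x) ^ 2)
    (x₀ : ℝ) (hx₀ : x₀ ∈ Set.Ioo a b) (hx₀' : g' x₀ = 0) :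
    ∀ x ∈ Set.Ioo a b,
      |g x - g ((a + b) / 2)| ≤
        C * (-Real.log ((x - a) / (b - a)) - Real.log ((b - x) / (b - a))
          + (b - a) / (x₀ - a) + (b - a) / (b - x₀)) :=
  stmt0_general a b C hab hC g g' g'' hg hg' hbound x₀ hx₀ hx₀'
end

section
/- Let f(x) = -log(x - β) for x > β. Let T be an interval exchange transformation, J=(a,b) the base of a Rohlin tower by intervals of height h (so T^i J, 0 ≤ i < h, are pairwise disjoint intervals). Then for every x ∈ J lying in the tower with all iterates T^k x > β contributing, the Birkhoff sum of the second derivative satisfies |∑_{k=0}^{h-1} f''(T^k x)| ≤ (π²/6)·1/(x-a)², where f''(x) = 1/(x-β)². -/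
open Set

/-- Birkhoff sums of `f''(x) = 1/(x-β)²` (the second derivative of
`f(x) = -log(x-β)` for `x > β`) along a Rohlin tower by intervals of base `J = (a,b)` and
height `h` satisfy `|∑_{k<h} f''(T^k x)| ≤ (π²/6) · 1/(x-a)²` for `x ∈ J`. -/
theorem stmt5 (T : ℝ → ℝ) (a b : ℝ) (hab : a < b) (h : ℕ) (β : ℝ)
    (hsub : ∀ i < h, ∀ y ∈ Set.Ioo a b, T^[i] y ∈ Set.Icc (0 : ℝ) 1)
    (htrans : ∀ i < h, ∃ c : ℝ, ∀ y ∈ Set.Ioo a b, T^[i] y = y + c)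
    (hdisj : ∀ i j, i < h → j < h → i ≠ j →
      Disjoint (T^[i] '' Set.Ioo a b) (T^[j] '' Set.Ioo a b))
    (hβ : ∀ i < h, β ∉ T^[i] '' Set.Ioo a b)
    (x : ℝ) (hx : x ∈ Set.Ioo a b) :
    |∑ k ∈ Finset.range h, (if β < T^[k] x then 1 / (T^[k] x - β) ^ 2 else 0)| ≤
      (Real.pi ^ 2 / 6) * (1 / (x - a) ^ 2) := by
  choose! c hc using htrans
  set d : ℝ := x - a with hd
  have hdpos : 0 < d := sub_pos.2 hx.1
  have hdlt : d < b - a := by simp only [hd]; linarith [hx.2]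
  -- images are translated intervals
  have himg : ∀ i < h, T^[i] '' Set.Ioo a b = Set.Ioo (a + c i) (b + c i) := by
    intro i hi
    have : T^[i] '' Set.Ioo a b = (fun y => y + c i) '' Set.Ioo a b :=
      Set.image_congr (fun y hy => hc i hi y hy)
    rw [this]
    simpa using Set.image_add_const_Ioo (c i) a b
  -- lower bound for contributing iterates
  have hlow : ∀ k < h, β < T^[k] x → d ≤ T^[k] x - β := by
    intro k hk hβk
    have hxc : T^[k] x = x + c k := hc k hk x hx
    have hβle : β ≤ a + c k := by
      by_contra h'
      push_neg at h'
      exact hβ k hk (by rw [himg k hk]; exact ⟨h', by rw [hxc] at hβk; linarith [hx.2]⟩)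
    rw [hxc]; simp only [hd]; linarith
  -- separation of translation constants
  have hsep : ∀ i j, i < h → j < h → i ≠ j → b - a ≤ |c i - c j| := by
    intro i j hi hj hij
    by_contra h'
    push_neg at h'
    rw [abs_lt] at h'
    set m : ℝ := ((a + max (c i) (c j)) + (b + min (c i) (c j))) / 2 with hm
    have hmaxmin : max (c i) (c j) - min (c i) (c j) < b - a := by
      rcases le_total (c i) (c j) with hle | hle <;>
        simp [max_eq_right, max_eq_left, min_eq_left, min_eq_right, hle] <;> linarith
    have key : ∀ k, min (c i) (c j) ≤ c k → c k ≤ max (c i) (c j) →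
        m ∈ Set.Ioo (a + c k) (b + c k) := by
      intro k h1 h2
      constructor <;> simp only [hm] <;> linarith
    have hmi : m ∈ T^[i] '' Set.Ioo a b := by
      rw [himg i hi]; exact key i (min_le_left _ _) (le_max_left _ _)
    have hmj : m ∈ T^[j] '' Set.Ioo a b := by
      rw [himg j hj]; exact key j (min_le_right _ _) (le_max_right _ _)
    exact Set.disjoint_left.1 (hdisj i j hi hj hij) hmi hmj
  -- rewrite as sum over the contributing set
  rw [← Finset.sum_filter]
  set S := (Finset.range h).filter (fun k => β < T^[k] x) with hS
  have hnonneg : (0:ℝ) ≤ ∑ k ∈ S, 1 / (T^[k] x - β) ^ 2 :=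
    Finset.sum_nonneg fun k _ => by positivity
  rw [abs_of_nonneg hnonneg]
  -- the floor map
  set φ : ℕ → ℕ := fun k => ⌊(T^[k] x - β) / d⌋₊ with hφ
  have hmemS : ∀ k ∈ S, k < h ∧ β < T^[k] x := by
    intro k hk
    simp only [hS, Finset.mem_filter, Finset.mem_range] at hk
    exact hk
  have hφ1 : ∀ k ∈ S, 1 ≤ φ k := by
    intro k hk
    obtain ⟨hk1, hk2⟩ := hmemS k hk
    exact Nat.le_floor (by rw [Nat.cast_one, le_div_iff₀ hdpos, one_mul]; exact hlow k hk1 hk2)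
  have hφle : ∀ k ∈ S, (φ k : ℝ) * d ≤ T^[k] x - β := by
    intro k hk
    obtain ⟨hk1, hk2⟩ := hmemS k hk
    have h0 : (0:ℝ) ≤ (T^[k] x - β) / d :=
      div_nonneg (le_trans hdpos.le (hlow k hk1 hk2)) hdpos.le
    have := Nat.floor_le h0
    calc (φ k : ℝ) * d ≤ ((T^[k] x - β) / d) * d := by
          exact mul_le_mul_of_nonneg_right this hdpos.le
      _ = T^[k] x - β := div_mul_cancel₀ _ hdpos.ne'
  have hφlt : ∀ k ∈ S, T^[k] x - β < ((φ k : ℝ) + 1) * d := by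
    intro k hk
    have := Nat.lt_floor_add_one ((T^[k] x - β) / d)
    calc T^[k] x - β = ((T^[k] x - β) / d) * d := (div_mul_cancel₀ _ hdpos.ne').symm
      _ < ((φ k : ℝ) + 1) * d := by
          exact mul_lt_mul_of_pos_right this hdpos
  -- injectivity of φ on S
  have hinj : Set.InjOn φ ↑S := by
    intro i hi j hj hφij
    by_contra hij
    obtain ⟨hi1, hi2⟩ := hmemS i hi
    obtain ⟨hj1, hj2⟩ := hmemS j hj
    have hsepij := hsep i j hi1 hj1 hij
    have hvi : T^[i] x = x + c i := hc i hi1 x hx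
    have hvj : T^[j] x = x + c j := hc j hj1 x hx
    have h1 := hφle i hi
    have h2 := hφlt i hi
    have h3 := hφle j hj
    have h4 := hφlt j hj
    rw [hφij] at h1 h2
    have habs : |c i - c j| < d := by
      rw [abs_lt]
      constructor <;> rw [hvi] at h1 h2 <;> rw [hvj] at h3 h4 <;> nlinarith
    linarith [abs_nonneg (c i - c j)]
  -- term-wise bound
  have hterm : ∀ k ∈ S, 1 / (T^[k] x - β) ^ 2 ≤ (1 / ((φ k : ℝ)) ^ 2) * (1 / d ^ 2) := by
    intro k hk
    obtain ⟨hk1, hk2⟩ := hmemS k hk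
    have hφpos : (0:ℝ) < (φ k : ℝ) := by exact_mod_cast hφ1 k hk
    have hmul : (0:ℝ) < (φ k : ℝ) * d := mul_pos hφpos hdpos
    have h1 : ((φ k : ℝ) * d) ^ 2 ≤ (T^[k] x - β) ^ 2 := by
      apply sq_le_sq' <;> nlinarith [hφle k hk, hlow k hk1 hk2]
    calc 1 / (T^[k] x - β) ^ 2 ≤ 1 / ((φ k : ℝ) * d) ^ 2 :=
          one_div_le_one_div_of_le (by positivity) h1
      _ = (1 / ((φ k : ℝ)) ^ 2) * (1 / d ^ 2) := by rw [mul_pow, ← one_div_mul_one_div]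
  -- assemble
  have hsum1 : ∑ k ∈ S, 1 / (T^[k] x - β) ^ 2 ≤
      (∑ k ∈ S, 1 / ((φ k : ℝ)) ^ 2) * (1 / d ^ 2) := by
    rw [Finset.sum_mul]
    exact Finset.sum_le_sum hterm
  have hsum2 : ∑ k ∈ S, 1 / ((φ k : ℝ)) ^ 2 ≤ Real.pi ^ 2 / 6 := by
    have himage : ∑ k ∈ S, 1 / ((φ k : ℝ)) ^ 2 =
        ∑ n ∈ S.image φ, 1 / (n : ℝ) ^ 2 :=
      (Finset.sum_image (f := fun n : ℕ => 1 / (n : ℝ) ^ 2)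
        (fun i hi j hj e => hinj hi hj e)).symm
    rw [himage]
    exact sum_le_hasSum (S.image φ) (fun n _ => by positivity) hasSum_zeta_two
  exact hsum1.trans (mul_le_mul_of_nonneg_right hsum2 (by positivity))
end

section
/- Suppose T and S are invertible maps of a set X with T∘S = S∘T⁻¹, S² = Id, and φ:X→ℝ satisfies φ∘T⁻¹∘S = -φ. If x₀ is a fixed point of S, then for every n ∈ ℕ, S_n(φ)(T^{-n}x₀) = -S_n(φ)(x₀). -/
theorem stmt8 {X : Type*} (T Tinv S : X → X)
    (hTinv₁ : Function.LeftInverse Tinv T) (hTinv₂ : Function.RightInverse Tinv T)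
    (hconj : ∀ x, T (S x) = S (Tinv x)) (hinv : ∀ x, S (S x) = x)
    (φ : X → ℝ) (hanti : ∀ x, φ (Tinv (S x)) = -φ x)
    (x₀ : X) (hx₀ : S x₀ = x₀) :
    ∀ n : ℕ,
      ∑ i ∈ Finset.range n, φ (T^[i] (Tinv^[n] x₀)) =
        -∑ i ∈ Finset.range n, φ (T^[i] x₀) := by
  -- S ∘ T = Tinv ∘ S
  have hST : ∀ x, S (T x) = Tinv (S x) := by
    intro x
    have := hconj (T x)
    rw [hTinv₁ x] at this
    have h2 : T (S (T x)) = T (Tinv (S x)) := by rw [this, hTinv₂]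
    exact hTinv₁.injective h2
  -- S ∘ T^[k] = Tinv^[k] ∘ S
  have hSTk : ∀ k x, S (T^[k] x) = Tinv^[k] (S x) := by
    intro k
    induction k with
    | zero => intro x; simp
    | succ k ih =>
      intro x
      rw [Function.iterate_succ_apply', Function.iterate_succ_apply', hST, ih]
  -- key: φ (Tinv^[k+1] x₀) = -φ (T^[k] x₀)
  have key : ∀ k, φ (Tinv^[k + 1] x₀) = -φ (T^[k] x₀) := by
    intro k
    have : Tinv^[k + 1] x₀ = Tinv (S (T^[k] x₀)) := by
      rw [hSTk, hx₀, Function.iterate_succ_apply']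
    rw [this, hanti]
  intro n
  have hterm : ∀ i ∈ Finset.range n, φ (T^[i] (Tinv^[n] x₀)) = -φ (T^[n - 1 - i] x₀) := by
    intro i hi
    rw [Finset.mem_range] at hi
    have h1 : Tinv^[n] x₀ = Tinv^[i] (Tinv^[n - i] x₀) := by
      rw [← Function.iterate_add_apply, Nat.add_sub_cancel' hi.le]
    have h2 : T^[i] (Tinv^[i] (Tinv^[n - i] x₀)) = Tinv^[n - i] x₀ :=
      hTinv₂.iterate i _
    have h3 : n - i = (n - 1 - i) + 1 := by omega
    rw [h1, h2, h3, key]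
  rw [Finset.sum_congr rfl hterm, Finset.sum_neg_distrib, neg_inj]
  exact Finset.sum_range_reflect (fun j => φ (T^[j] x₀)) n
end

section
/- Let g:I→ℝ be a function of bounded variation with total variation V. Let T:I→I be an IET and x, x' ∈ J where J is the base of a Rohlin tower by intervals of height h (so the intervals T^j J, 0 ≤ j < h, are pairwise disjoint). Then for any 0 ≤ h' ≤ h, |∑_{j=0}^{h'-1} g(T^j x) - ∑_{j=0}^{h'-1} g(T^j x')| ≤ V. -/
/-! Since `T^[j]` is a translation on `J = Ioo a b`, each `T^[j] '' J` is an open interval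
containing both `T^[j] x` and `T^[j] x'`. The variations of `g` on pairwise disjoint intervals add
up to at most its variation on `s`: ordered by left endpoints, disjoint intervals lie each entirely
to the left of the next, so `eVariationOn.add_le_union` applies inductively. -/

open Set

theorem le_of_mem_Ioo_of_disjoint {α : Type*} [LinearOrder α] {p₁ q₁ p₂ q₂ x y : α}
    (hp : p₁ ≤ p₂) (hd : Disjoint (Ioo p₁ q₁) (Ioo p₂ q₂))
    (hx : x ∈ Ioo p₁ q₁) (hy : y ∈ Ioo p₂ q₂) : x ≤ y := by
  by_contra! hyx
  exact disjoint_left.mp hd ⟨hp.trans_lt hy.1, hyx.trans hx.2⟩ hy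

namespace eVariationOn

variable {α E ι : Type*} [LinearOrder α] [PseudoEMetricSpace E]

theorem sum_inter_Ioo_le_inter_biUnion (f : α → E) (s : Set α) {p q : ι → α} (F : Finset ι)
    (hF : (F : Set ι).PairwiseDisjoint fun i => Ioo (p i) (q i)) :
    ∑ i ∈ F, eVariationOn f (s ∩ Ioo (p i) (q i)) ≤
      eVariationOn f (s ∩ ⋃ i ∈ F, Ioo (p i) (q i)) := by
  classical
  induction F using Finset.induction_on_max_value p with
  | empty => simp
  | insert j F hj hmax ih =>
    rw [Finset.coe_insert, pairwiseDisjoint_insert] at hF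
    rw [Finset.sum_insert hj, add_comm, Finset.set_biUnion_insert, union_comm,
      inter_union_distrib_left]
    refine (add_le_add (ih hF.1) le_rfl).trans (add_le_union f ?_)
    rintro x ⟨-, hx⟩ y ⟨-, hy⟩
    obtain ⟨i, hi, hxi⟩ := mem_iUnion₂.mp hx
    have hdisj : Disjoint (Ioo (p i) (q i)) (Ioo (p j) (q j)) :=
      (hF.2 i hi fun hji => hj (hji ▸ hi)).symm
    exact le_of_mem_Ioo_of_disjoint (hmax i hi) hdisj hxi hy

theorem sum_edist_le_of_pairwiseDisjoint_Ioo (f : α → E) {s : Set α} {p q u v : ι → α}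
    {F : Finset ι} (hF : (F : Set ι).PairwiseDisjoint fun i => Ioo (p i) (q i))
    (hu : ∀ i ∈ F, u i ∈ s ∩ Ioo (p i) (q i))
    (hv : ∀ i ∈ F, v i ∈ s ∩ Ioo (p i) (q i)) :
    ∑ i ∈ F, edist (f (u i)) (f (v i)) ≤ eVariationOn f s :=
  calc ∑ i ∈ F, edist (f (u i)) (f (v i))
    _ ≤ ∑ i ∈ F, eVariationOn f (s ∩ Ioo (p i) (q i)) :=
      Finset.sum_le_sum fun i hi => edist_le f (hu i hi) (hv i hi)
    _ ≤ eVariationOn f (s ∩ ⋃ i ∈ F, Ioo (p i) (q i)) :=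
      sum_inter_Ioo_le_inter_biUnion f s F hF
    _ ≤ eVariationOn f s := mono f inter_subset_left

theorem ofReal_abs_sum_sub_sum_le_of_pairwiseDisjoint_Ioo (f : α → ℝ) {s : Set α}
    {p q u v : ι → α} {F : Finset ι}
    (hF : (F : Set ι).PairwiseDisjoint fun i => Ioo (p i) (q i))
    (hu : ∀ i ∈ F, u i ∈ s ∩ Ioo (p i) (q i))
    (hv : ∀ i ∈ F, v i ∈ s ∩ Ioo (p i) (q i)) :
    ENNReal.ofReal |∑ i ∈ F, f (u i) - ∑ i ∈ F, f (v i)| ≤ eVariationOn f s :=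
  calc ENNReal.ofReal |∑ i ∈ F, f (u i) - ∑ i ∈ F, f (v i)|
    _ ≤ ENNReal.ofReal (∑ i ∈ F, |f (u i) - f (v i)|) := by
      rw [← Finset.sum_sub_distrib]
      exact ENNReal.ofReal_le_ofReal (Finset.abs_sum_le_sum_abs _ _)
    _ = ∑ i ∈ F, edist (f (u i)) (f (v i)) := by
      rw [ENNReal.ofReal_sum_of_nonneg fun i _ => abs_nonneg _]
      simp only [edist_dist, Real.dist_eq]
    _ ≤ eVariationOn f s := sum_edist_le_of_pairwiseDisjoint_Ioo f hF hu hv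

end eVariationOn

theorem stmt12_general (g : ℝ → ℝ) (s : Set ℝ) (V : ℝ) (hV0 : 0 ≤ V)
    (hV : eVariationOn g s = ENNReal.ofReal V)
    (T : ℝ → ℝ) (a b : ℝ) (h : ℕ)
    (hsub : ∀ j < h, T^[j] '' Set.Ioo a b ⊆ s)
    (htrans : ∀ j < h, ∃ c : ℝ, ∀ y ∈ Set.Ioo a b, T^[j] y = y + c)
    (hdisj : ∀ i j, i < h → j < h → i ≠ j →
      Disjoint (T^[i] '' Set.Ioo a b) (T^[j] '' Set.Ioo a b))
    (x x' : ℝ) (hx : x ∈ Set.Ioo a b) (hx' : x' ∈ Set.Ioo a b)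
    (h' : ℕ) (hh' : h' ≤ h) :
    |∑ j ∈ Finset.range h', g (T^[j] x) - ∑ j ∈ Finset.range h', g (T^[j] x')| ≤ V := by
  choose! c hc using htrans
  have hlt : ∀ j ∈ Finset.range h', j < h := fun j hj => (Finset.mem_range.mp hj).trans_le hh'
  have himage : ∀ j ∈ Finset.range h', T^[j] '' Ioo a b = Ioo (a + c j) (b + c j) :=
    fun j hj => by rw [image_congr (hc j (hlt j hj)), image_add_const_Ioo]
  have hmem : ∀ y ∈ Ioo a b, ∀ j ∈ Finset.range h',
      T^[j] y ∈ s ∩ Ioo (a + c j) (b + c j) := fun y hy j hj => by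
      rw [← himage j hj]
      exact ⟨hsub j (hlt j hj) (mem_image_of_mem _ hy), mem_image_of_mem _ hy⟩
  have hpd : ((Finset.range h' : Finset ℕ) : Set ℕ).PairwiseDisjoint
      fun j => Ioo (a + c j) (b + c j) := fun i hi j hj hij => by
    simpa only [himage i hi, himage j hj] using hdisj i j (hlt i hi) (hlt j hj) hij
  rw [← ENNReal.ofReal_le_ofReal_iff hV0, ← hV]
  exact eVariationOn.ofReal_abs_sum_sub_sum_le_of_pairwiseDisjoint_Ioo g hpd
    (hmem x hx) (hmem x' hx')

theorem stmt12 (g : ℝ → ℝ) (s : Set ℝ) (V : ℝ) (hV0 : 0 ≤ V)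
    (hV : eVariationOn g s = ENNReal.ofReal V)
    (T : ℝ → ℝ) (a b : ℝ) (hab : a < b) (h : ℕ)
    (hsub : ∀ j < h, T^[j] '' Set.Ioo a b ⊆ s)
    (htrans : ∀ j < h, ∃ c : ℝ, ∀ y ∈ Set.Ioo a b, T^[j] y = y + c)
    (hdisj : ∀ i j, i < h → j < h → i ≠ j →
      Disjoint (T^[i] '' Set.Ioo a b) (T^[j] '' Set.Ioo a b))
    (x x' : ℝ) (hx : x ∈ Set.Ioo a b) (hx' : x' ∈ Set.Ioo a b)
    (h' : ℕ) (hh' : h' ≤ h) :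
    |∑ j ∈ Finset.range h', g (T^[j] x) - ∑ j ∈ Finset.range h', g (T^[j] x')| ≤ V :=
  stmt12_general g s V hV0 hV T a b h hsub htrans hdisj x x' hx hx' h' hh'
end
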